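/- Let A be a matrix over a field F, partitioned by rows as A = [A₁; A₂], and let A₁' be a maximal set of rows of A₁ that are linearly independent from each other and from the rows of A₂ (so A₁' has α = rank(A) − rank(A₂) rows). Then the map γ ↦ A₁'γ restricted to the null space of A₂ is surjective onto F^α. -/
import Mathlib

/-- Let A = [A₁; A₂] over a field F, and let A₁' be a set of α = rank(A) − rank(A₂)
rows of A₁ that together with the rows of A₂ are linearly independent. Then
γ ↦ A₁'γ restricted to the null space of A₂ is surjective onto F^α. -/
theorem selected_rows_surjective_on_nullspace
    {F : Type*} [Field F] {m₁ m₂ n α : Type*}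
    [Fintype m₁] [Fintype m₂] [Fintype n] [Fintype α] [DecidableEq n]
    (A₁ : Matrix m₁ n F) (A₂ : Matrix m₂ n F)
    (ρ : α → m₁) (hρ : Function.Injective ρ)
    (hLI : LinearIndependent F (fun i => Matrix.fromRows (A₁.submatrix ρ id) A₂ i))
    (hα : (Fintype.card α : ℕ) = (Matrix.fromRows A₁ A₂).rank - A₂.rank) :
    ∀ y : α → F, ∃ γ : n → F, A₂.mulVec γ = 0 ∧ (A₁.submatrix ρ id).mulVec γ = y := by
  intro y
  set B := Matrix.fromRows (A₁.submatrix ρ id) A₂ with hB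
  have hrank : B.rank = Fintype.card (α ⊕ m₂) := hLI.rank_matrix
  have hsurj : Function.Surjective B.mulVecLin := by
    rw [← LinearMap.range_eq_top]
    apply Submodule.eq_top_of_finrank_eq
    rw [← Matrix.rank, hrank]
    simp [Module.finrank_pi]
  obtain ⟨γ, hγ⟩ := hsurj (Sum.elim y 0)
  refine ⟨γ, ?_, ?_⟩
  · have := congrArg (fun f => f ∘ Sum.inr) hγ
    simpa [B, Matrix.mulVecLin, Matrix.fromRows_mulVec] using this
  · have := congrArg (fun f => f ∘ Sum.inl) hγ
    simpa [B, Matrix.mulVecLin, Matrix.fromRows_mulVec] using this
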